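/- For every natural number n, ∫₀¹ p_{n+1}(x) · N p_n(x) dx = h_{n+1} / ( 2(2n+1)(2n+3) ), where h_{n+1} = 1 + 1/2 + ⋯ + 1/(n+1) is the (n+1)-th harmonic number, N p_n(x) = ∫₀ˣ (F(x) − F(t))/(x − t) dt, and F(t) = ∫₀ᵗ p_n(u) du. -/

import Mathlib

open MeasureTheory intervalIntegral

/-- Shifted Legendre polynomial `p n x = (1/n!) dⁿ/dxⁿ (xⁿ(x-1)ⁿ)`. -/
noncomputable def shiftedLegendre (n : ℕ) : ℝ → ℝ :=
  fun x => (1 / (Nat.factorial n) : ℝ) * iteratedDeriv n (fun t : ℝ => t ^ n * (t - 1) ^ n) x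

/-!
The divided difference of `t ↦ t ^ (k + 1)` is a geometric sum, so `N` sends `x ^ k` to
`h_{k+1} / (k + 1) · x ^ (k + 1)`. By Rodrigues' formula and repeated integration by parts,
`p_{n+1}` is orthogonal to every polynomial of degree at most `n`, so only the leading term
`C(2n, n) h_{n+1} / (n + 1) · x ^ (n + 1)` of `N p_n` contributes, and the same integration by parts
reduces `∫₀¹ p_{n+1}(x) x ^ (n + 1) dx` to the Beta integral `((n + 1)!)² / (2n + 3)!`.
-/

open Polynomial hiding shiftedLegendre
open Finset Nat

theorem Polynomial.iteratedDeriv_eval {𝕜 : Type*} [NontriviallyNormedField 𝕜] (p : 𝕜[X])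
    (k : ℕ) : iteratedDeriv k (fun x => p.eval x) = fun x => (derivative^[k] p).eval x := by
  have hsemiconj : Function.Semiconj (fun (q : 𝕜[X]) (x : 𝕜) => q.eval x) derivative deriv :=
    fun q => by funext x; exact (Polynomial.deriv q).symm
  rw [iteratedDeriv_eq_iterate]
  exact (hsemiconj.iterate_right k p).symm

theorem Polynomial.integral_eval_mul_derivative (p q : ℝ[X]) (a b : ℝ) :
    ∫ x in a..b, p.eval x * (derivative q).eval x
      = p.eval b * q.eval b - p.eval a * q.eval a
        - ∫ x in a..b, (derivative p).eval x * q.eval x :=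
  integral_mul_deriv_eq_deriv_mul (fun x _ => p.hasDerivAt x) (fun x _ => q.hasDerivAt x)
    (p.derivative.continuous.intervalIntegrable _ _)
    (q.derivative.continuous.intervalIntegrable _ _)

theorem Polynomial.eval_eq_zero_of_pow_dvd {R : Type*} [CommRing R] {p : R[X]} {a : R} {k : ℕ}
    (h : (X - C a) ^ (k + 1) ∣ p) : p.eval a = 0 :=
  dvd_iff_isRoot.mp ((dvd_pow_self _ k.succ_ne_zero).trans h)

theorem Polynomial.integral_iterate_derivative_mul_eval {k : ℕ} {p : ℝ[X]} {a b : ℝ}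
    (ha : (X - C a) ^ k ∣ p) (hb : (X - C b) ^ k ∣ p) (q : ℝ[X]) :
    ∫ x in a..b, (derivative^[k] p).eval x * q.eval x
      = (-1) ^ k * ∫ x in a..b, p.eval x * (derivative^[k] q).eval x := by
  induction k generalizing p q with
  | zero => simp
  | succ k ih =>
    have hibp := integral_eval_mul_derivative p (derivative^[k] q) a b
    rw [eval_eq_zero_of_pow_dvd ha, eval_eq_zero_of_pow_dvd hb,
      ← Function.iterate_succ_apply' derivative k q] at hibp
    have ha' : (X - C a) ^ k ∣ derivative p := by
      simpa using pow_sub_one_dvd_derivative_of_pow_dvd ha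
    have hb' : (X - C b) ^ k ∣ derivative p := by
      simpa using pow_sub_one_dvd_derivative_of_pow_dvd hb
    rw [Function.iterate_succ_apply, ih ha' hb', pow_succ, hibp]
    ring

theorem integral_pow_mul_sub_one_pow (a b : ℕ) :
    ∫ x in (0:ℝ)..1, x ^ a * (x - 1) ^ b = (-1) ^ b * a ! * b ! / (a + b + 1)! := by
  induction b generalizing a with
  | zero =>
    simp only [pow_zero, mul_one, integral_pow, one_pow, add_zero, factorial_succ]
    push_cast
    field_simp
    simp
  | succ b ih =>
    have hibp := integral_mul_deriv_eq_deriv_mul (a := 0) (b := 1)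
      (u := fun x : ℝ => (x - 1) ^ (b + 1)) (v := fun x : ℝ => x ^ (a + 1))
      (fun x _ => (hasDerivAt_pow (b + 1) (x - 1)).comp_sub_const x 1)
      (fun x _ => hasDerivAt_pow (a + 1) x)
      (Continuous.intervalIntegrable (by fun_prop) _ _)
      (Continuous.intervalIntegrable (by fun_prop) _ _)
    have hlhs : ∫ x in (0:ℝ)..1, (x - 1) ^ (b + 1) * (((a + 1 : ℕ) : ℝ) * x ^ (a + 1 - 1))
        = (a + 1) * ∫ x in (0:ℝ)..1, x ^ a * (x - 1) ^ (b + 1) := by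
      rw [← intervalIntegral.integral_const_mul]; congr 1; ext x; push_cast; ring
    have hrhs : ∫ x in (0:ℝ)..1, ((b + 1 : ℕ) : ℝ) * (x - 1) ^ (b + 1 - 1) * x ^ (a + 1)
        = (b + 1) * ∫ x in (0:ℝ)..1, x ^ (a + 1) * (x - 1) ^ b := by
      rw [← intervalIntegral.integral_const_mul]; congr 1; ext x; push_cast; ring
    rw [hlhs, hrhs, ih] at hibp
    simp only [sub_self, zero_pow (succ_ne_zero _), zero_mul, mul_zero, zero_sub] at hibp
    apply mul_left_cancel₀ (show (a : ℝ) + 1 ≠ 0 by positivity)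
    rw [hibp, show a + 1 + b + 1 = a + (b + 1) + 1 by omega, factorial_succ a, factorial_succ b]
    push_cast
    ring

theorem shiftedLegendre_eq_eval_iterate_derivative (n : ℕ) (x : ℝ) :
    shiftedLegendre n x = (n ! : ℝ)⁻¹ * (derivative^[n] (X ^ n * (X - 1) ^ n)).eval x := by
  have hpoly : (fun t : ℝ => t ^ n * (t - 1) ^ n)
      = fun t => (X ^ n * (X - 1) ^ n : ℝ[X]).eval t := by
    simp
  rw [shiftedLegendre, hpoly, iteratedDeriv_eval, one_div]

theorem iterate_derivative_X_pow_mul_X_sub_one_pow (n : ℕ) :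
    derivative^[n] (X ^ n * (X - 1) ^ n : ℤ[X])
      = (n ! : ℤ[X]) * (C ((-1) ^ n) * Polynomial.shiftedLegendre n) := by
  have hsign : (X ^ n * (X - 1) ^ n : ℤ[X]) = C ((-1) ^ n) * (X ^ n * (1 - X) ^ n) := by
    rw [← neg_sub, neg_pow, map_pow, map_neg, map_one]
    ring
  rw [hsign, iterate_derivative_C_mul, ← factorial_mul_shiftedLegendre_eq]
  ring

/-- Mathlib's `Polynomial.shiftedLegendre` is built on `(1 - X) ^ n`, hence the sign. -/
noncomputable def realShiftedLegendre (n : ℕ) : ℝ[X] :=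
  (C ((-1) ^ n) * Polynomial.shiftedLegendre n).map (Int.castRingHom ℝ)

theorem shiftedLegendre_eq_eval (n : ℕ) :
    shiftedLegendre n = fun x => (realShiftedLegendre n).eval x := by
  ext x
  have hmap : (X ^ n * (X - 1) ^ n : ℝ[X])
      = (X ^ n * (X - 1) ^ n : ℤ[X]).map (Int.castRingHom ℝ) := by
    simp
  rw [shiftedLegendre_eq_eval_iterate_derivative, realShiftedLegendre, hmap,
    iterate_derivative_map, iterate_derivative_X_pow_mul_X_sub_one_pow, Polynomial.map_mul,
    eval_mul, Polynomial.map_natCast, eval_natCast, inv_mul_cancel_left₀ (by positivity)]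

theorem integral_shiftedLegendre_mul_eval (n : ℕ) (q : ℝ[X]) :
    ∫ x in (0:ℝ)..1, shiftedLegendre n x * q.eval x
      = (-1) ^ n / n ! * ∫ x in (0:ℝ)..1, x ^ n * (x - 1) ^ n * (derivative^[n] q).eval x := by
  conv_lhs => simp only [shiftedLegendre_eq_eval_iterate_derivative, mul_assoc,
    intervalIntegral.integral_const_mul]
  rw [integral_iterate_derivative_mul_eval (by simp [dvd_mul_right]) (by simp [dvd_mul_left])]
  simp [div_eq_inv_mul, mul_assoc]

theorem integral_shiftedLegendre_mul_pow_of_lt {n j : ℕ} (h : j < n) :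
    ∫ x in (0:ℝ)..1, shiftedLegendre n x * x ^ j = 0 := by
  simpa [iterate_derivative_eq_zero (natDegree_X_pow_le j |>.trans_lt h)]
    using integral_shiftedLegendre_mul_eval n (X ^ j)

theorem integral_shiftedLegendre_mul_pow_self (n : ℕ) :
    ∫ x in (0:ℝ)..1, shiftedLegendre n x * x ^ n = n ! * n ! / (2 * n + 1)! := by
  have h := integral_shiftedLegendre_mul_eval n (X ^ n)
  simp only [eval_pow, eval_X, iterate_derivative_X_pow_eq_C_mul, descFactorial_self,
    Nat.sub_self, pow_zero, mul_one, eval_C, intervalIntegral.integral_mul_const,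
    integral_pow_mul_sub_one_pow] at h
  rw [h, ← two_mul]
  field_simp
  ring_nf
  simp [pow_mul']

theorem continuous_shiftedLegendre (n : ℕ) : Continuous (shiftedLegendre n) :=
  shiftedLegendre_eq_eval n ▸ (realShiftedLegendre n).continuous

/-- The operator `N` of the paper. -/
noncomputable def operatorN (f : ℝ → ℝ) (x : ℝ) : ℝ :=
  ∫ t in (0:ℝ)..x, ((∫ u in (0:ℝ)..x, f u) - ∫ u in (0:ℝ)..t, f u) / (x - t)

theorem div_sub_pow_ae_eq (k : ℕ) (x : ℝ) :
    (fun t => (x ^ (k + 1) - t ^ (k + 1)) / (x - t))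
      =ᵐ[volume] fun t => ∑ j ∈ range (k + 1), x ^ j * t ^ (k - j) := by
  filter_upwards [Measure.ae_ne volume x] with t ht
  rw [div_eq_iff (sub_ne_zero.mpr ht.symm), ← geom_sum₂_mul, Nat.add_sub_cancel]

theorem intervalIntegrable_div_sub_pow (k : ℕ) (x : ℝ) :
    IntervalIntegrable (fun t => (x ^ (k + 1) - t ^ (k + 1)) / (x - t)) volume 0 x :=
  (Continuous.intervalIntegrable (by fun_prop) 0 x).congr_ae
    (ae_restrict_of_ae (div_sub_pow_ae_eq k x).symm)

theorem integral_div_sub_pow (k : ℕ) (x : ℝ) :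
    ∫ t in (0:ℝ)..x, (x ^ (k + 1) - t ^ (k + 1)) / (x - t) = harmonic (k + 1) * x ^ (k + 1) := by
  rw [integral_congr_ae ((div_sub_pow_ae_eq k x).mono fun t ht _ => ht),
    intervalIntegral.integral_finsetSum fun j _ => Continuous.intervalIntegrable (by fun_prop) _ _]
  have hterm : ∀ j ∈ range (k + 1),
      ∫ t in (0:ℝ)..x, x ^ j * t ^ (k - j) = ((k - j : ℕ) + 1 : ℝ)⁻¹ * x ^ (k + 1) := by
    intro j hj
    rw [intervalIntegral.integral_const_mul, integral_pow, zero_pow (succ_ne_zero _), sub_zero,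
      div_eq_inv_mul, mul_left_comm, ← pow_add]
    congr 2
    have := mem_range_succ_iff.mp hj
    omega
  have hreflect := sum_range_reflect (fun i : ℕ => ((i : ℝ) + 1)⁻¹) (k + 1)
  rw [Nat.add_sub_cancel] at hreflect
  rw [sum_congr rfl hterm, ← sum_mul, hreflect]
  simp [harmonic]

theorem integral_eval_eq_sum {p : ℝ[X]} {m : ℕ} (hm : p.natDegree < m) (t : ℝ) :
    ∫ u in (0:ℝ)..t, p.eval u = ∑ k ∈ range m, p.coeff k / (k + 1) * t ^ (k + 1) := by
  simp_rw [eval_eq_sum_range' hm]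
  rw [intervalIntegral.integral_finsetSum fun k _ =>
    Continuous.intervalIntegrable (by fun_prop) _ _]
  refine sum_congr rfl fun k _ => ?_
  rw [intervalIntegral.integral_const_mul, integral_pow, zero_pow (succ_ne_zero k), sub_zero]
  ring

theorem operatorN_eval {p : ℝ[X]} {m : ℕ} (hm : p.natDegree < m) (x : ℝ) :
    operatorN (fun u => p.eval u) x
      = ∑ k ∈ range m, p.coeff k * harmonic (k + 1) / (k + 1) * x ^ (k + 1) := by
  have hsplit : ∀ t, ((∫ u in (0:ℝ)..x, p.eval u) - ∫ u in (0:ℝ)..t, p.eval u) / (x - t)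
      = ∑ k ∈ range m, p.coeff k / (k + 1) * ((x ^ (k + 1) - t ^ (k + 1)) / (x - t)) := by
    intro t
    rw [integral_eval_eq_sum hm, integral_eval_eq_sum hm, ← sum_sub_distrib, sum_div]
    exact sum_congr rfl fun k _ => by ring
  simp_rw [operatorN, hsplit]
  rw [intervalIntegral.integral_finsetSum fun k _ =>
    (intervalIntegrable_div_sub_pow k x).const_mul _]
  refine sum_congr rfl fun k _ => ?_
  rw [intervalIntegral.integral_const_mul, integral_div_sub_pow]
  ring

theorem natDegree_realShiftedLegendre_lt (n : ℕ) :
    (realShiftedLegendre n).natDegree < n + 1 := by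
  refine Nat.lt_succ_of_le (natDegree_map_le.trans ((natDegree_C_mul_le _ _).trans ?_))
  rw [natDegree_shiftedLegendre]

theorem coeff_realShiftedLegendre_self (n : ℕ) :
    (realShiftedLegendre n).coeff n = (n + n).choose n := by
  rw [realShiftedLegendre, coeff_map, coeff_C_mul, coeff_shiftedLegendre, ← mul_assoc,
    ← mul_assoc, ← pow_add, Even.neg_one_pow ⟨n, rfl⟩]
  simp

theorem stmt16 (n : ℕ) :
    ∫ x in (0:ℝ)..1, shiftedLegendre (n + 1) x *
        (∫ t in (0:ℝ)..x,
          ((∫ u in (0:ℝ)..x, shiftedLegendre n u) - ∫ u in (0:ℝ)..t, shiftedLegendre n u)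
            / (x - t)) =
      (∑ i ∈ Finset.range (n + 1), (1 : ℝ) / ((i : ℝ) + 1)) /
        (2 * (2 * (n : ℝ) + 1) * (2 * (n : ℝ) + 3)) := by
  change ∫ x in (0:ℝ)..1, shiftedLegendre (n + 1) x * operatorN (shiftedLegendre n) x = _
  simp_rw [shiftedLegendre_eq_eval n, operatorN_eval (natDegree_realShiftedLegendre_lt n), mul_sum]
  rw [intervalIntegral.integral_finsetSum fun k _ => Continuous.intervalIntegrable
    (by have := continuous_shiftedLegendre (n + 1); fun_prop) 0 1]
  simp_rw [mul_left_comm (shiftedLegendre (n + 1) _), intervalIntegral.integral_const_mul]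
  rw [sum_eq_single_of_mem n (self_mem_range_succ n) fun k hk _ => by
      rw [integral_shiftedLegendre_mul_pow_of_lt (by simp at hk; omega), mul_zero],
    integral_shiftedLegendre_mul_pow_self, coeff_realShiftedLegendre_self, cast_add_choose]
  have hharmonic : (harmonic (n + 1) : ℝ) = ∑ i ∈ range (n + 1), 1 / ((i : ℝ) + 1) := by
    simp [harmonic]
  rw [hharmonic, show 2 * (n + 1) + 1 = n + n + 2 + 1 by omega, factorial_succ (n + n + 2),
    factorial_succ (n + n + 1), factorial_succ (n + n), factorial_succ n]
  push_cast
  field_simp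
  ring
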